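/- Let G be a group acting on a set M and let H be a finite subgroup of G which is the unique maximal stationary subgroup of the action up to conjugation. Then the induced action of N(H)/H on M^H is free: if n ∈ N(H) and x ∈ M^H satisfy n • x = x, then n ∈ H. -/

import Mathlib

/-
If `n` fixes `x ∈ M^H`, then `K = ⟨H, n⟩` fixes `x`, so `K ≤ lHl⁻¹` for some `l`. In particular
`H ≤ lHl⁻¹`, and since conjugation preserves the (finite) order of `H`, this inclusion is an
equality; hence `n ∈ K ≤ H`.
-/

/-- The fixed-point set `M^K` of a subgroup `K` acting on `M`. -/
def fixedPts {G : Type*} [Group G] (M : Type*) [MulAction G M] (K : Subgroup G) : Set M :=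
  {x : M | ∀ k ∈ K, k • x = x}

/-- The conjugate subgroup `gHg⁻¹`. -/
def conjSubgroup {G : Type*} [Group G] (g : G) (H : Subgroup G) : Subgroup G :=
  Subgroup.map (MulAut.conj g).toMonoidHom H

/-- `H` is the unique, up to conjugation, maximal stationary subgroup of the action of `G`
on `M`: `H` is finite and every subgroup with nonempty fixed-point set is contained in
some conjugate of `H`. -/
def UniqueMaxStationary {G : Type*} [Group G] (M : Type*) [MulAction G M]
    (H : Subgroup G) : Prop :=
  Finite H ∧ ∀ K : Subgroup G, (fixedPts M K).Nonempty → ∃ l : G, K ≤ conjSubgroup l H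

section

variable {G : Type*} [Group G]

theorem mem_fixedPts_iff_le_stabilizer {M : Type*} [MulAction G M] {K : Subgroup G} {x : M} :
    x ∈ fixedPts M K ↔ K ≤ MulAction.stabilizer G x :=
  Iff.rfl

theorem mem_fixedPts_sup_zpowers {M : Type*} [MulAction G M] {H : Subgroup G} {n : G} {x : M}
    (hx : x ∈ fixedPts M H) (hnx : n • x = x) : x ∈ fixedPts M (H ⊔ Subgroup.zpowers n) :=
  mem_fixedPts_iff_le_stabilizer.2 <|
    sup_le (mem_fixedPts_iff_le_stabilizer.1 hx) (Subgroup.zpowers_le.2 hnx)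

theorem card_conjSubgroup (g : G) (H : Subgroup G) : Nat.card (conjSubgroup g H) = Nat.card H :=
  Subgroup.card_map_of_injective (MulAut.conj g).injective

theorem eq_conjSubgroup_of_le {H : Subgroup G} [Finite H] {g : G} (hle : H ≤ conjSubgroup g H) :
    H = conjSubgroup g H :=
  haveI : Finite (conjSubgroup g H) := Nat.finite_of_card_ne_zero <| by
    rw [card_conjSubgroup]; exact Nat.card_pos.ne'
  Subgroup.eq_of_le_of_card_ge hle (card_conjSubgroup g H).le

end

/-- If `H` is the unique maximal stationary subgroup up to conjugation, then the induced
action of `N(H)/H` on `M^H` is free: if `n ∈ N(H)` fixes some `x ∈ M^H`, then `n ∈ H`. -/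
theorem quotient_action_free_on_fixedPts {G M : Type*} [Group G] [MulAction G M]
    (H : Subgroup G) (hH : UniqueMaxStationary M H) :
    ∀ n ∈ Subgroup.normalizer (H : Set G), ∀ x ∈ fixedPts M H, n • x = x → n ∈ H := by
  obtain ⟨hfin, hmax⟩ := hH
  intro n _ x hx hnx
  obtain ⟨l, hl⟩ := hmax _ ⟨x, mem_fixedPts_sup_zpowers hx hnx⟩
  have hconj : H = conjSubgroup l H := eq_conjSubgroup_of_le (le_sup_left.trans hl)
  exact hconj ▸ hl (Subgroup.mem_sup_right (Subgroup.mem_zpowers n))
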